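/- Let k(t,s)=𝔎(t−s), where 𝔎:(0,∞)→ℝ is continuous and satisfies |𝔎(t)|≤M t^{β−1} e^{γt} for all t>0, for some constants M,γ≥0 and β∈(0,1]. Then k satisfies Assumption (K) with α*=1−β, and the coefficients c_n satisfy e^{−γt}|c_n(t)| ≤ (MΓ(β)t^β)^n / Γ(nβ+1) for every n∈ℕ and t>0; consequently, for every λ∈ℂ and t≥0, ∑_{n=0}^∞ |c_n(t)||λ|^n ≤ e^{γt} E_β(MΓ(β)|λ|t^β). -/

import Mathlib

open MeasureTheory Filter

noncomputable section

noncomputable def coeff (k : ℝ → ℝ → ℝ) : ℕ → ℝ → ℝ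
  | 0, _ => 1
  | n + 1, t => if 0 < t then ∫ s in Set.Ioc (0:ℝ) t, k t s * coeff k n s else 0

noncomputable def Phi (k : ℝ → ℝ → ℝ) (t : ℝ) (l : ℂ) : ℂ :=
  ∑' n : ℕ, (coeff k n t : ℂ) * l ^ n

noncomputable def PhiR (k : ℝ → ℝ → ℝ) (t : ℝ) (x : ℝ) : ℝ :=
  ∑' n : ℕ, coeff k n t * x ^ n

noncomputable def mlR (ρ : ℝ) (x : ℝ) : ℝ :=
  ∑' n : ℕ, x ^ n / Real.Gamma (ρ * (n : ℝ) + 1)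

/-!
The kernel is dominated by the convolution-type majorant `M (t-s)^(β-1) e^(γ(t-s))`, so the
weight `e^(γt)` factors through every iterate, and the Beta integral
`∫₀ᵗ (t-s)^(β-1) s^(nβ) ds = t^((n+1)β) Γ(β) Γ(nβ+1) / Γ((n+1)β+1)` turns the recursion for `c_n`
into that of the Mittag-Leffler coefficients. Assumption (K) holds with `ε = β`: then
`(β-1)(1+ε) = β² - 1 > -1`, so `|k(t,·)|^(1+ε)` is integrable and its norm scales like the right
power of `t`. The Mittag-Leffler series converges since `Γ(y) ≥ c^(y-1) e^(-c)` for all `c > 0`,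
`y ≥ 1`, which for `c^β = x + 1` bounds its terms by a geometric series of ratio `x / (x + 1)`.
-/

open Real Set

theorem integral_Ioc_sub_rpow_mul_rpow {a b t : ℝ} (ha : 0 < a) (hb : 0 < b) (ht : 0 < t) :
    ∫ s in Ioc 0 t, (t - s) ^ (a - 1) * s ^ (b - 1) =
      t ^ (a + b - 1) * (Gamma a * Gamma b / Gamma (a + b)) := by
  have hC := Complex.betaIntegral_scaled b a ht
  rw [Complex.betaIntegral_eq_Gamma_mul_div _ _ (by simpa) (by simpa),
    intervalIntegral.integral_of_le ht.le] at hC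
  apply Complex.ofReal_injective
  rw [← integral_complex_ofReal]
  convert hC using 1
  · refine setIntegral_congr_fun measurableSet_Ioc fun s hs => ?_
    push_cast
    rw [Complex.ofReal_cpow (sub_nonneg.2 hs.2), Complex.ofReal_cpow hs.1.le, mul_comm]
    push_cast; rfl
  · simp only [Complex.ofReal_mul, Complex.ofReal_div, Complex.ofReal_cpow ht.le,
      ← Complex.Gamma_ofReal]
    push_cast
    ring_nf

theorem integrableOn_Ioc_sub_rpow_mul_rpow {a b t : ℝ} (ha : 0 < a) (hb : 0 < b) (ht : 0 < t) :
    IntegrableOn (fun s => (t - s) ^ (a - 1) * s ^ (b - 1)) (Ioc 0 t) :=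
  -- a Bochner integral that is not zero comes from an integrable function
  .of_integral_ne_zero <| by
    rw [integral_Ioc_sub_rpow_mul_rpow ha hb ht]
    have := Gamma_pos_of_pos ha; have := Gamma_pos_of_pos hb
    have := Gamma_pos_of_pos (add_pos ha hb)
    positivity

theorem integral_Ioc_sub_rpow {a t : ℝ} (ha : 0 < a) (ht : 0 < t) :
    ∫ s in Ioc 0 t, (t - s) ^ (a - 1) = t ^ a / a := by
  have h := integral_Ioc_sub_rpow_mul_rpow ha one_pos ht
  simp only [sub_self, rpow_zero, mul_one, add_sub_cancel_right, Gamma_one,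
    Gamma_add_one ha.ne'] at h
  rw [h]
  field_simp [(Gamma_pos_of_pos ha).ne']

theorem integrableOn_Ioc_sub_rpow {a t : ℝ} (ha : 0 < a) (ht : 0 < t) :
    IntegrableOn (fun s => (t - s) ^ (a - 1)) (Ioc 0 t) :=
  .of_integral_ne_zero <| by rw [integral_Ioc_sub_rpow ha ht]; positivity

theorem rpow_mul_exp_neg_le_Gamma {c y : ℝ} (hc : 0 < c) (hy : 1 ≤ y) :
    c ^ (y - 1) * exp (-c) ≤ Gamma y := by
  have hint := GammaIntegral_convergent (by linarith : 0 < y)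
  calc c ^ (y - 1) * exp (-c) = ∫ x in Ioi c, exp (-x) * c ^ (y - 1) := by
        rw [integral_mul_const, integral_exp_neg_Ioi, mul_comm]
    _ ≤ ∫ x in Ioi c, exp (-x) * x ^ (y - 1) := by
        refine setIntegral_mono_on ((integrableOn_exp_neg_Ioi c).mul_const _)
          (hint.mono_set (Ioi_subset_Ioi hc.le)) measurableSet_Ioi fun x hx => ?_
        exact mul_le_mul_of_nonneg_left (rpow_le_rpow hc.le hx.le (by linarith)) (exp_pos _).le
    _ ≤ ∫ x in Ioi 0, exp (-x) * x ^ (y - 1) :=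
        setIntegral_mono_set hint
          (ae_restrict_of_forall_mem measurableSet_Ioi fun x hx =>
            mul_nonneg (exp_pos _).le (rpow_nonneg (le_of_lt hx) _))
          (Ioi_subset_Ioi hc.le).eventuallyLE
    _ = Gamma y := (Gamma_eq_integral (by linarith)).symm

theorem summable_pow_div_Gamma_mul_add_one {ρ x : ℝ} (hρ : 0 < ρ) (hx : 0 ≤ x) :
    Summable fun n : ℕ => x ^ n / Gamma (ρ * n + 1) := by
  set c := (x + 1) ^ ρ⁻¹
  have hc : 0 < c := by positivity
  have hr : x / (x + 1) < 1 := (div_lt_one (by positivity)).2 (lt_add_one x)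
  refine Summable.of_nonneg_of_le (fun n => ?_) (fun n => ?_)
    ((summable_geometric_of_lt_one (by positivity) hr).mul_left (exp c))
  · have := Gamma_pos_of_pos (by positivity : 0 < ρ * n + 1)
    positivity
  · have hΓ := rpow_mul_exp_neg_le_Gamma (y := ρ * n + 1) hc
      (le_add_of_nonneg_left (by positivity))
    rw [add_sub_cancel_right, rpow_mul_natCast hc.le, rpow_inv_rpow (by positivity) hρ.ne'] at hΓ
    rw [div_le_iff₀ ((by positivity : (0:ℝ) < _).trans_le hΓ)]
    calc x ^ n = exp c * (x / (x + 1)) ^ n * ((x + 1) ^ n * exp (-c)) := by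
          rw [div_pow, exp_neg]; field_simp
      _ ≤ _ := by gcongr

theorem summable_and_tsum_le_mul_mlR {ρ C y : ℝ} {a : ℕ → ℝ} (hρ : 0 < ρ) (hy : 0 ≤ y)
    (ha0 : ∀ n, 0 ≤ a n) (ha : ∀ n, a n ≤ C * (y ^ n / Gamma (ρ * n + 1))) :
    Summable a ∧ ∑' n, a n ≤ C * mlR ρ y := by
  have hS := (summable_pow_div_Gamma_mul_add_one hρ hy).mul_left C
  have hA := hS.of_nonneg_of_le ha0 ha
  exact ⟨hA, (hA.tsum_le_tsum ha hS).trans_eq tsum_mul_left⟩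

section VolterraKernel

variable {k : ℝ → ℝ → ℝ} {M γ β : ℝ}

theorem abs_integral_kernel_mul_le
    (hkb : ∀ t s, 0 < s → s < t → |k t s| ≤ M * (t - s) ^ (β - 1) * exp (γ * (t - s)))
    (hβ : 0 < β) {f : ℝ → ℝ} {A b t : ℝ} (hb : -1 < b) (ht : 0 < t)
    (hf : ∀ s, 0 < s → s < t → |f s| ≤ A * s ^ b * exp (γ * s)) :
    |∫ s in Ioc 0 t, k t s * f s| ≤
      M * A * (Gamma β * Gamma (b + 1) / Gamma (β + (b + 1))) * t ^ (β + b) * exp (γ * t) := by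
  have hb1 : 0 < b + 1 := by linarith
  rw [← Real.norm_eq_abs]
  calc ‖∫ s in Ioc 0 t, k t s * f s‖
      ≤ ∫ s in Ioc 0 t, M * A * exp (γ * t) * ((t - s) ^ (β - 1) * s ^ (b + 1 - 1)) := by
        refine norm_integral_le_of_norm_le
          ((integrableOn_Ioc_sub_rpow_mul_rpow hβ hb1 ht).const_mul _) ?_
        rw [← Measure.restrict_congr_set Ioo_ae_eq_Ioc]
        refine ae_restrict_of_forall_mem measurableSet_Ioo fun s ⟨hs, hst⟩ => ?_
        have hk := hkb t s hs hst
        calc ‖k t s * f s‖ = |k t s| * |f s| := abs_mul _ _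
          _ ≤ (M * (t - s) ^ (β - 1) * exp (γ * (t - s))) * (A * s ^ b * exp (γ * s)) :=
              mul_le_mul hk (hf s hs hst) (abs_nonneg _) ((abs_nonneg _).trans hk)
          _ = M * A * exp (γ * t) * ((t - s) ^ (β - 1) * s ^ (b + 1 - 1)) := by
              rw [add_sub_cancel_right, show γ * t = γ * (t - s) + γ * s by ring, exp_add]
              ring
    _ = _ := by
        rw [integral_const_mul, integral_Ioc_sub_rpow_mul_rpow hβ hb1 ht,
          show β + (b + 1) - 1 = β + b by ring]
        ring

theorem abs_coeff_le
    (hkb : ∀ t s, 0 < s → s < t → |k t s| ≤ M * (t - s) ^ (β - 1) * exp (γ * (t - s)))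
    (hγ : 0 ≤ γ) (hβ : 0 < β) (n : ℕ) {t : ℝ} (ht : 0 ≤ t) :
    |coeff k n t| ≤ exp (γ * t) * ((M * Gamma β * t ^ β) ^ n / Gamma (n * β + 1)) := by
  have hpow : ∀ (n : ℕ) {x : ℝ}, 0 ≤ x →
      (M * Gamma β * x ^ β) ^ n = (M * Gamma β) ^ n * x ^ (n * β) := fun n x hx => by
    rw [mul_pow, mul_comm (n : ℝ), rpow_mul_natCast hx]
  induction n generalizing t with
  | zero => simpa [coeff] using one_le_exp (mul_nonneg hγ ht)
  | succ n ih =>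
    rcases ht.eq_or_lt with rfl | ht
    · simp [coeff, zero_rpow hβ.ne']
    rw [coeff, if_pos ht]
    have hΓ := (Gamma_pos_of_pos (by positivity : (0 : ℝ) < n * β + 1)).ne'
    refine (abs_integral_kernel_mul_le hkb hβ (A := (M * Gamma β) ^ n / Gamma (n * β + 1))
      (b := n * β) (neg_one_lt_zero.trans_le (by positivity)) ht fun s hs _ => ?_).trans_eq ?_
    · rw [mul_comm _ (exp _), div_mul_eq_mul_div, ← hpow n hs.le]
      exact ih hs.le
    · rw [hpow (n + 1) ht.le, show β + (n * β + 1) = (n + 1 : ℕ) * β + 1 by push_cast; ring,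
        show β + n * β = (n + 1 : ℕ) * β by push_cast; ring]
      field_simp
      ring

theorem integrableOn_abs_kernel_rpow_and_integral_le
    (hkb : ∀ t s, 0 < s → s < t → |k t s| ≤ M * (t - s) ^ (β - 1) * exp (γ * (t - s)))
    (hM : 0 ≤ M) (hγ : 0 ≤ γ) {p T t : ℝ} (hp : 0 < p) (he : 0 < (β - 1) * p + 1)
    (ht : 0 < t) (htT : t ≤ T)
    (hkm : AEStronglyMeasurable (k t) (volume.restrict (Ioo 0 t))) :
    IntegrableOn (fun s => |k t s| ^ p) (Ioc 0 t) ∧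
      ∫ s in Ioc 0 t, |k t s| ^ p ≤
        (M * exp (γ * T)) ^ p * (t ^ ((β - 1) * p + 1) / ((β - 1) * p + 1)) := by
  set e := (β - 1) * p + 1
  have hbound : ∀ s ∈ Ioo 0 t, |k t s| ^ p ≤ (M * exp (γ * T)) ^ p * (t - s) ^ (e - 1) := by
    rintro s ⟨hs, hst⟩
    have hts : 0 < t - s := sub_pos.2 hst
    have hk : |k t s| ≤ M * exp (γ * T) * (t - s) ^ (β - 1) :=
      calc |k t s| ≤ M * (t - s) ^ (β - 1) * exp (γ * (t - s)) := hkb t s hs hst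
        _ ≤ M * (t - s) ^ (β - 1) * exp (γ * T) := by gcongr; linarith
        _ = M * exp (γ * T) * (t - s) ^ (β - 1) := by ring
    calc |k t s| ^ p ≤ (M * exp (γ * T) * (t - s) ^ (β - 1)) ^ p :=
          rpow_le_rpow (abs_nonneg _) hk hp.le
      _ = (M * exp (γ * T)) ^ p * (t - s) ^ (e - 1) := by
          rw [mul_rpow (by positivity) (by positivity), ← rpow_mul hts.le, add_sub_cancel_right]
  have hg : IntegrableOn (fun s => (M * exp (γ * T)) ^ p * (t - s) ^ (e - 1)) (Ioo 0 t) :=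
    IntegrableOn.mono_set ((integrableOn_Ioc_sub_rpow he ht).const_mul _) Ioo_subset_Ioc_self
  have hint : IntegrableOn (fun s => |k t s| ^ p) (Ioo 0 t) :=
    hg.mono' (hkm.aemeasurable.abs.pow_const p).aestronglyMeasurable <|
      ae_restrict_of_forall_mem measurableSet_Ioo fun s hs => by
        rw [norm_of_nonneg (by positivity)]
        exact hbound s hs
  refine ⟨(integrableOn_Ioc_iff_integrableOn_Ioo (f := fun s => |k t s| ^ p)).2 hint, ?_⟩
  rw [integral_Ioc_eq_integral_Ioo, ← integral_Ioc_sub_rpow he ht, ← integral_const_mul,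
    integral_Ioc_eq_integral_Ioo]
  exact setIntegral_mono_on hint hg measurableSet_Ioo hbound

theorem integrableOn_abs_kernel_rpow_and_rpow_mul_le
    (hkb : ∀ t s, 0 < s → s < t → |k t s| ≤ M * (t - s) ^ (β - 1) * exp (γ * (t - s)))
    (hM : 0 ≤ M) (hγ : 0 ≤ γ) {p T t : ℝ} (hp : 0 < p) (he : 0 < (β - 1) * p + 1)
    (ht : 0 < t) (htT : t ≤ T)
    (hkm : AEStronglyMeasurable (k t) (volume.restrict (Ioo 0 t))) :
    IntegrableOn (fun s => |k t s| ^ p) (Ioc 0 t) ∧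
      t ^ ((1 - β) - 1 / p) * (∫ s in Ioc 0 t, |k t s| ^ p) ^ (1 / p) ≤
        M * exp (γ * T) / ((β - 1) * p + 1) ^ (1 / p) := by
  obtain ⟨hint, hI⟩ := integrableOn_abs_kernel_rpow_and_integral_le hkb hM hγ hp he ht htT hkm
  refine ⟨hint, ?_⟩
  set e := (β - 1) * p + 1
  have htpow : t ^ ((1 - β) - 1 / p) * t ^ (e / p) = 1 := by
    rw [← rpow_add ht, show (1 - β) - 1 / p + e / p = 0 by field_simp; ring, rpow_zero]
  calc t ^ ((1 - β) - 1 / p) * (∫ s in Ioc 0 t, |k t s| ^ p) ^ (1 / p)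
      ≤ t ^ ((1 - β) - 1 / p) * ((M * exp (γ * T)) ^ p * (t ^ e / e)) ^ (1 / p) := by
        gcongr
    _ = M * exp (γ * T) / e ^ (1 / p) := by
        rw [mul_rpow (by positivity) (by positivity), div_rpow (by positivity) he.le,
          ← rpow_mul (by positivity), ← rpow_mul ht.le, mul_one_div_cancel hp.ne', rpow_one,
          mul_one_div e]
        linear_combination (M * exp (γ * T) / e ^ (1 / p)) * htpow

end VolterraKernel

theorem stmt14 (K : ℝ → ℝ) (hKc : ContinuousOn K (Set.Ioi 0))
    (M γ β : ℝ) (hM : 0 ≤ M) (hγ : 0 ≤ γ) (hβ0 : 0 < β)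
    (hKb : ∀ t : ℝ, 0 < t → |K t| ≤ M * t ^ (β - 1) * Real.exp (γ * t))
    (k : ℝ → ℝ → ℝ) (hk : ∀ t s, k t s = K (t - s)) :
    (∃ ε : ℝ, 0 < ε ∧ ∀ T : ℝ, 0 < T → ∃ KT : ℝ, ∀ t : ℝ, 0 < t → t ≤ T →
      MeasureTheory.IntegrableOn (fun s => |k t s| ^ (1 + ε)) (Set.Ioc 0 t) ∧
      t ^ ((1 - β) - 1 / (1 + ε)) *
        (∫ s in Set.Ioc (0:ℝ) t, |k t s| ^ (1 + ε)) ^ (1 / (1 + ε)) ≤ KT) ∧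
    (∀ n : ℕ, ∀ t : ℝ, 0 < t →
      Real.exp (-(γ * t)) * |coeff k n t| ≤
        (M * Real.Gamma β * t ^ β) ^ n / Real.Gamma ((n : ℝ) * β + 1)) ∧
    (∀ z : ℂ, ∀ t : ℝ, 0 ≤ t →
      Summable (fun n : ℕ => |coeff k n t| * ‖z‖ ^ n) ∧
      (∑' n : ℕ, |coeff k n t| * ‖z‖ ^ n) ≤
        Real.exp (γ * t) * mlR β (M * Real.Gamma β * ‖z‖ * t ^ β)) := by
  have hkb : ∀ t s, 0 < s → s < t → |k t s| ≤ M * (t - s) ^ (β - 1) * exp (γ * (t - s)) :=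
    fun t s _ hst => hk t s ▸ hKb _ (sub_pos.2 hst)
  have hkm : ∀ t, AEStronglyMeasurable (k t) (volume.restrict (Ioo 0 t)) := fun t => by
    rw [show k t = fun s => K (t - s) from funext (hk t)]
    exact (hKc.comp (continuous_sub_left t).continuousOn fun s hs => sub_pos.2 hs.2)
      |>.aestronglyMeasurable measurableSet_Ioo
  refine ⟨⟨β, hβ0, fun T _ => ⟨_, fun t ht htT =>
    integrableOn_abs_kernel_rpow_and_rpow_mul_le hkb hM hγ (by positivity)
      (by nlinarith) ht htT (hkm t)⟩⟩, fun n t ht => ?_, fun z t ht => ?_⟩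
  · rw [exp_neg, inv_mul_le_iff₀ (exp_pos _)]
    exact abs_coeff_le hkb hγ hβ0 n ht.le
  · refine summable_and_tsum_le_mul_mlR hβ0 (by positivity) (fun n => by positivity) fun n => ?_
    calc |coeff k n t| * ‖z‖ ^ n
        ≤ exp (γ * t) * ((M * Gamma β * t ^ β) ^ n / Gamma (n * β + 1)) * ‖z‖ ^ n := by
          gcongr
          exact abs_coeff_le hkb hγ hβ0 n ht
      _ = exp (γ * t) * ((M * Gamma β * ‖z‖ * t ^ β) ^ n / Gamma (β * n + 1)) := by
          rw [mul_comm β]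
          ring
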